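/- Let k ≥ 0 be an integer. Suppose a, b, c are distinct integers in {0, ..., k} and there exist nonzero integers λ, μ with λ·(a,b,c) + μ·(1,1,1) = (1,-1,0), and nonzero integers λ', μ' with λ'·(a,b,c) + μ'·(1,1,1) = (0,k,1). Then k = 2. -/

import Mathlib

/-- Both sides equal `l * l' * (a - c) * (b - c)`: this is the vanishing of the determinant with
rows `λ • x + μ • 1`, `λ' • x + μ' • 1`, `1`. -/
theorem affine_sub_mul_sub_comm {R : Type*} [CommRing R] (l m l' m' a b c : R) :
    (l * a + m - (l * c + m)) * (l' * b + m' - (l' * c + m')) =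
      (l * b + m - (l * c + m)) * (l' * a + m' - (l' * c + m')) := by
  ring

theorem stmt0_general (k a b c : ℤ)
    (h1 : ∃ l m : ℤ, l ≠ 0 ∧ m ≠ 0 ∧
      l * a + m * 1 = 1 ∧ l * b + m * 1 = -1 ∧ l * c + m * 1 = 0)
    (h2 : ∃ l' m' : ℤ, l' ≠ 0 ∧ m' ≠ 0 ∧
      l' * a + m' * 1 = 0 ∧ l' * b + m' * 1 = k ∧ l' * c + m' * 1 = 1) :
    k = 2 := by
  obtain ⟨l, m, -, -, e1, e2, e3⟩ := h1
  obtain ⟨l', m', -, -, f1, f2, f3⟩ := h2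
  have key := affine_sub_mul_sub_comm l (m * 1) l' (m' * 1) a b c
  rw [e1, e2, e3, f1, f2, f3] at key
  linarith

/-- Self-duality for `Tot(O(-k))` over `ℙ¹`: if `a, b, c` are distinct integers in
`{0, …, k}` and there exist nonzero integers `λ, μ` with
`λ·(a,b,c) + μ·(1,1,1) = (1,-1,0)` and nonzero integers `λ', μ'` with
`λ'·(a,b,c) + μ'·(1,1,1) = (0,k,1)`, then `k = 2`. -/
theorem stmt0 (k a b c : ℤ) (hk : 0 ≤ k)
    (hab : a ≠ b) (hac : a ≠ c) (hbc : b ≠ c)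
    (ha : 0 ≤ a ∧ a ≤ k) (hb : 0 ≤ b ∧ b ≤ k) (hc : 0 ≤ c ∧ c ≤ k)
    (h1 : ∃ l m : ℤ, l ≠ 0 ∧ m ≠ 0 ∧
      l * a + m * 1 = 1 ∧ l * b + m * 1 = -1 ∧ l * c + m * 1 = 0)
    (h2 : ∃ l' m' : ℤ, l' ≠ 0 ∧ m' ≠ 0 ∧
      l' * a + m' * 1 = 0 ∧ l' * b + m' * 1 = k ∧ l' * c + m' * 1 = 1) :
    k = 2 :=
  stmt0_general k a b c h1 h2
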